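/- For the AdaPBB iteration, the quantities B_k and E_k satisfy: α_k·E_k = θ_k for all k ≥ 1; and, for all k ≥ 0, 2B_{k+1} ≤ α_k²/α_{k+1}² and E_{k+1}·α_{k+1}² ≤ E_k·α_k² + α_k. -/

import Mathlib

open scoped RealInnerProductSpace
open Finset Filter

noncomputable section

/-- The AdaPBB iteration (Algorithm 3 of the paper) in its implicit form, for a composite
objective `F = f + g` where `f : ℝⁿ → ℝ` is convex and differentiable with gradient `f'`,
and `g : ℝⁿ → ℝ` is convex.  `ξ k` is a subgradient of `g` at `x k`. -/
structure AdaPBB (n : ℕ) where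
  f : EuclideanSpace ℝ (Fin n) → ℝ
  g : EuclideanSpace ℝ (Fin n) → ℝ
  f' : EuclideanSpace ℝ (Fin n) → EuclideanSpace ℝ (Fin n)
  x : ℕ → EuclideanSpace ℝ (Fin n)
  ξ : ℕ → EuclideanSpace ℝ (Fin n)
  α : ℕ → ℝ
  θ : ℕ → ℝ
  lam : ℕ → ℝ
  hfconv : ConvexOn ℝ Set.univ f
  hgconv : ConvexOn ℝ Set.univ g
  hgrad : ∀ y, HasGradientAt f (f' y) y
  hmin : ∃ z, ∀ y, f z + g z ≤ f y + g y
  hα0 : 0 < α 0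
  hθ0 : 0 ≤ θ 0
  hsub : ∀ k, ∀ y, g (x k) + ⟪ξ k, y - x k⟫ ≤ g y
  hstep : ∀ k, x (k + 1) = x k - α k • (f' (x k) + ξ (k + 1))
  hne : ∀ k, f' (x (k + 1)) ≠ f' (x k)
  hlam : ∀ k, lam (k + 1) =
    ⟪f' (x (k + 1)) - f' (x k), x (k + 1) - x k⟫ / ‖f' (x (k + 1)) - f' (x k)‖ ^ 2
  hlampos : ∀ k, 0 < lam (k + 1)
  hcase1 : ∀ k, α k ≤ lam (k + 1) →
    α (k + 1) = Real.sqrt (1 + θ k) * α k ∧ θ (k + 1) = α (k + 1) / α k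
  hcase2 : ∀ k, α k / 2 < lam (k + 1) → lam (k + 1) < α k →
    α (k + 1) = α k / Real.sqrt 2 ∧ θ (k + 1) = 0
  hcase3 : ∀ k, lam (k + 1) ≤ α k / 2 →
    α (k + 1) = lam (k + 1) / Real.sqrt 2 ∧ θ (k + 1) = 0

namespace AdaPBB

variable {n : ℕ}

/-- The composite objective `F = f + g`. -/
def F (S : AdaPBB n) (y : EuclideanSpace ℝ (Fin n)) : ℝ := S.f y + S.g y

/-- `B_k` (for `k ≥ 1`), as in (5.13). -/
def B (S : AdaPBB n) (k : ℕ) : ℝ :=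
  if S.α (k - 1) ≤ S.lam k then 0
  else if S.α (k - 1) / 2 < S.lam k then 1
  else (S.α (k - 1) - S.lam k) ^ 2 / S.lam k ^ 2

/-- `E_k` for `k ≥ 1`, as in (5.13). -/
def Eaux (S : AdaPBB n) (k : ℕ) : ℝ :=
  if S.α (k - 1) ≤ S.lam k then 1 / S.α (k - 1) else 0

/-- `E_k`, with the convention `E_0 = (E_1·α_1² - α_0)/α_0²`. -/
def E (S : AdaPBB n) (k : ℕ) : ℝ :=
  if k = 0 then (S.Eaux 1 * S.α 1 ^ 2 - S.α 0) / S.α 0 ^ 2 else S.Eaux k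

/-- The energy `V_k` (for `k ≥ 1`), relative to a minimizer `xs` of `F`. -/
def V (S : AdaPBB n) (xs : EuclideanSpace ℝ (Fin n)) (k : ℕ) : ℝ :=
  ‖S.x k - xs‖ ^ 2 + 2 * S.B k * S.α k ^ 2 * ‖S.f' (S.x (k - 1)) + S.ξ (k - 1)‖ ^ 2 +
    2 * S.α (k - 1) * (1 + S.E (k - 1) * S.α (k - 1)) * (S.F (S.x (k - 1)) - S.F xs)

/-- The energy `U_k` (for `k ≥ 1`), relative to a minimizer `xs` of `F`. -/
def U (S : AdaPBB n) (xs : EuclideanSpace ℝ (Fin n)) (k : ℕ) : ℝ :=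
  ‖S.x k - xs‖ ^ 2 + 2 * S.B k * S.α k ^ 2 * ‖S.f' (S.x (k - 1)) + S.ξ (k - 1)‖ ^ 2 +
    2 * S.E k * S.α k ^ 2 * (S.F (S.x (k - 1)) - S.F xs)

end AdaPBB

end

/-! All three claims are checked separately in each of the three step-size cases; the only
inductive input is `α_k > 0` (together with `θ_k ≥ 0`). In case (i) the bound on
`E_{k+1} α_{k+1}²` holds with equality, because `α_{k+1}² = (1 + θ_k) α_k²` and
`θ_k = α_k E_k`. -/

namespace AdaPBB

variable {n : ℕ} (S : AdaPBB n)

lemma α_pos_and_θ_nonneg (k : ℕ) : 0 < S.α k ∧ 0 ≤ S.θ k := by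
  induction k with
  | zero => exact ⟨S.hα0, S.hθ0⟩
  | succ k ih =>
    obtain ⟨hα, hθ⟩ := ih
    by_cases h1 : S.α k ≤ S.lam (k + 1)
    · obtain ⟨hα', hθ'⟩ := S.hcase1 k h1
      have hα'_pos : 0 < S.α (k + 1) := by
        rw [hα']
        exact mul_pos (Real.sqrt_pos.2 (by linarith)) hα
      exact ⟨hα'_pos, by rw [hθ']; positivity⟩
    · push Not at h1
      by_cases h2 : S.α k / 2 < S.lam (k + 1)
      · obtain ⟨hα', hθ'⟩ := S.hcase2 k h2 h1
        exact ⟨by rw [hα']; positivity, hθ'.ge⟩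
      · push Not at h2
        obtain ⟨hα', hθ'⟩ := S.hcase3 k h2
        have := S.hlampos k
        exact ⟨by rw [hα']; positivity, hθ'.ge⟩

lemma α_pos (k : ℕ) : 0 < S.α k := (S.α_pos_and_θ_nonneg k).1

lemma θ_nonneg (k : ℕ) : 0 ≤ S.θ k := (S.α_pos_and_θ_nonneg k).2

lemma E_succ (k : ℕ) : S.E (k + 1) = if S.α k ≤ S.lam (k + 1) then 1 / S.α k else 0 := by
  simp only [E, Eaux, Nat.add_one_ne_zero, if_false, Nat.add_sub_cancel]

lemma E_succ_nonneg (k : ℕ) : 0 ≤ S.E (k + 1) := by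
  rw [E_succ]
  split_ifs
  · exact one_div_nonneg.2 (S.α_pos k).le
  · exact le_rfl

lemma E_zero_mul_sq : S.E 0 * S.α 0 ^ 2 = S.E 1 * S.α 1 ^ 2 - S.α 0 := by
  have := S.α_pos 0
  simp only [E, if_true, Nat.one_ne_zero, if_false]
  field_simp

lemma α_mul_E_succ (k : ℕ) : S.α (k + 1) * S.E (k + 1) = S.θ (k + 1) := by
  rw [E_succ]
  by_cases h1 : S.α k ≤ S.lam (k + 1)
  · rw [if_pos h1, (S.hcase1 k h1).2, mul_one_div]
  · push Not at h1
    rw [if_neg h1.not_ge, mul_zero]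
    by_cases h2 : S.α k / 2 < S.lam (k + 1)
    · exact (S.hcase2 k h2 h1).2.symm
    · exact (S.hcase3 k (not_lt.1 h2)).2.symm

lemma two_mul_B_succ_le (k : ℕ) : 2 * S.B (k + 1) ≤ S.α k ^ 2 / S.α (k + 1) ^ 2 := by
  have hα := S.α_pos k
  have hsqrt2 : Real.sqrt 2 ^ 2 = 2 := Real.sq_sqrt zero_le_two
  simp only [B, Nat.add_sub_cancel]
  by_cases h1 : S.α k ≤ S.lam (k + 1)
  · rw [if_pos h1, mul_zero]
    positivity
  · push Not at h1
    rw [if_neg h1.not_ge]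
    by_cases h2 : S.α k / 2 < S.lam (k + 1)
    · rw [if_pos h2, (S.hcase2 k h2 h1).1, div_pow, hsqrt2,
        div_div_cancel₀ (by positivity)]
      norm_num
    · push Not at h2
      have hlam := S.hlampos k
      rw [if_neg h2.not_gt, (S.hcase3 k h2).1, div_pow, hsqrt2, div_div_eq_mul_div,
        mul_div_assoc', mul_comm (S.α k ^ 2)]
      gcongr
      linarith

lemma E_succ_mul_sq_le (k : ℕ) : S.E (k + 1) * S.α (k + 1) ^ 2 ≤ S.E k * S.α k ^ 2 + S.α k := by
  cases k with
  | zero => rw [E_zero_mul_sq]; linarith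
  | succ k =>
    by_cases h1 : S.α (k + 1) ≤ S.lam (k + 2)
    · have hα := S.α_pos (k + 1)
      have hsq : S.α (k + 2) ^ 2 = (1 + S.θ (k + 1)) * S.α (k + 1) ^ 2 := by
        rw [(S.hcase1 (k + 1) h1).1, mul_pow, Real.sq_sqrt (by linarith [S.θ_nonneg (k + 1)])]
      rw [E_succ, if_pos h1, hsq, ← S.α_mul_E_succ k]
      field_simp
      linarith
    · rw [E_succ, if_neg h1, zero_mul]
      have := S.E_succ_nonneg k
      have := S.α_pos (k + 1)
      positivity

end AdaPBB

/-- Lemma 5.6: for the AdaPBB iteration, `α_k·E_k = θ_k` for all `k ≥ 1`; and for all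
`k ≥ 0`, `2·B_{k+1} ≤ α_k²/α_{k+1}²` and `E_{k+1}·α_{k+1}² ≤ E_k·α_k² + α_k`. -/
theorem adapbb_BE_properties (n : ℕ) (S : AdaPBB n) :
    (∀ k, 1 ≤ k → S.α k * S.E k = S.θ k) ∧
    (∀ k, 2 * S.B (k + 1) ≤ S.α k ^ 2 / S.α (k + 1) ^ 2 ∧
      S.E (k + 1) * S.α (k + 1) ^ 2 ≤ S.E k * S.α k ^ 2 + S.α k) :=
  ⟨fun k hk => by
    obtain ⟨k, rfl⟩ := Nat.exists_eq_add_of_le' hk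
    exact S.α_mul_E_succ k,
  fun k => ⟨S.two_mul_B_succ_le k, S.E_succ_mul_sq_le k⟩⟩
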